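/- Let X be a connected graph with no bridges and basepoint x₀. Let α: x₀ → x and β: x₀ → x′ be paths, let e be an edge with s(e) = x, let f be an edge with s(f) = x′, and let t, u ∈ [0,1]. If the 1-chain (c_α + t·e) − (c_β + u·f) is orthogonal to every 1-cycle in Z₁(X,ℝ), then c_α + t·e = c_β + u·f. -/

import Mathlib

/-!
Orthogonality to every 1-cycle makes `c = (c_α + t·e) − (c_β + u·f)` the gradient of a
potential `g` on the vertices. If `c(h) > 0`, cut the graph along `U = {v | g(s h) < g v}`:
every edge crosses the cut with nonnegative flux, `h` and `h⁻¹` contribute `2 c(h)`, and since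
`h` is not a bridge, some other edge leaves `U` and contributes a positive amount. On the other
hand `∂c` is twice the difference of the probability measures `(1-t)δ_{s e} + t δ_{t e}` and
`(1-u)δ_{s f} + u δ_{t f}`, so the flux through the cut is at most `2`. This squeezes `c(h)`
strictly between two consecutive integers shifted by the fractional part of `c(h)`, which is
impossible. Rewriting the first point as `c_{αe} + (1-t)·e⁻¹` and swapping the two points, it
suffices to take `h = e` or `h ∉ {e, e⁻¹, f, f⁻¹}`.
-/

/-- A graph in the sense of Sunada's topological crystallography: a set of vertices,
a set of edges, source and target maps, and a fixed-point free involution sending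
each edge to its inverse. -/
structure SunadaGraph where
  V : Type
  E : Type
  s : E → V
  t : E → V
  inv : E → E
  s_inv : ∀ e, s (inv e) = t e
  t_inv : ∀ e, t (inv e) = s e
  inv_inv : ∀ e, inv (inv e) = e
  inv_ne : ∀ e, inv e ≠ e

namespace SunadaGraph

variable (X : SunadaGraph)

/-- `X.IsPath x y γ` : the word of edges `γ` is a path from `x` to `y` in `X`. -/
inductive IsPath : X.V → X.V → List X.E → Prop
  | nil (x : X.V) : IsPath x x []
  | cons (e : X.E) {y : X.V} {γ : List X.E} (h : IsPath (X.t e) y γ) :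
      IsPath (X.s e) y (e :: γ)

/-- A graph is connected if any two vertices are joined by a path. -/
def Connected : Prop := ∀ x y : X.V, ∃ γ : List X.E, X.IsPath x y γ

/-- An edge is a bridge if there is no path from its target to its source
avoiding both the edge and its inverse. -/
def IsBridge (e : X.E) : Prop :=
  ¬ ∃ γ : List X.E, X.IsPath (X.t e) (X.s e) γ ∧ e ∉ γ ∧ X.inv e ∉ γ

/-- The space `C₁(X,ℝ)` of real 1-chains: formal linear combinations of edges
with `e⁻¹ = -e`, realized as finitely supported functions `c : E → ℝ` with
`c(e⁻¹) = - c(e)`. -/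
noncomputable def C1 : Submodule ℝ (X.E →₀ ℝ) where
  carrier := {c | ∀ e, c (X.inv e) = - c e}
  add_mem' := by
    intro a b ha hb e
    simp only [Finsupp.add_apply, ha e, hb e]
    ring
  zero_mem' := by intro e; simp
  smul_mem' := by
    intro r c hc e
    simp only [Finsupp.smul_apply, hc e, smul_eq_mul]
    ring

/-- The 1-chain associated to a single edge. -/
noncomputable def edgeChain (e : X.E) : ↥X.C1 :=
  ⟨Finsupp.single e 1 - Finsupp.single (X.inv e) 1, by
    intro f
    classical
    have h1 : (e = X.inv f) ↔ (X.inv e = f) := by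
      constructor
      · rintro rfl; exact X.inv_inv f
      · rintro rfl; exact (X.inv_inv e).symm
    have h2 : (X.inv e = X.inv f) ↔ (e = f) := by
      constructor
      · intro h
        have := congrArg X.inv h
        rwa [X.inv_inv, X.inv_inv] at this
      · rintro rfl; rfl
    simp only [Finsupp.sub_apply, Finsupp.single_apply, h1, h2]
    ring⟩

/-- The 1-chain `c_γ` of a path `γ`. -/
noncomputable def pathChain (γ : List X.E) : ↥X.C1 := (γ.map X.edgeChain).sum

/-- The inner product on `C₁(X,ℝ)` for which the edges form an orthonormal basis
(with `e⁻¹` counting as the negative of `e`). -/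
noncomputable def chainInner (c d : ↥X.C1) : ℝ :=
  (1/2) * ((c : X.E →₀ ℝ).sum fun e x => x * (d : X.E →₀ ℝ) e)

/-- The boundary of a 1-chain. -/
noncomputable def boundary (c : ↥X.C1) : X.V →₀ ℝ :=
  (c : X.E →₀ ℝ).sum fun e x => x • (Finsupp.single (X.t e) (1:ℝ) - Finsupp.single (X.s e) 1)

/-- A 1-cycle is a 1-chain with vanishing boundary. -/
def IsCycle (c : ↥X.C1) : Prop := X.boundary c = 0

/-- An integral 1-chain: all coefficients are integers. -/
def IsIntegral (c : ↥X.C1) : Prop := ∀ e, ∃ n : ℤ, (c : X.E →₀ ℝ) e = (n : ℝ)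

/-- The support of a 1-chain: the set of edges with positive coefficient. -/
def chainSupp (c : ↥X.C1) : Set X.E := {e | 0 < (c : X.E →₀ ℝ) e}

/-- `p` is the orthogonal projection of `C₁(X,ℝ)` onto the space `Z₁(X,ℝ)` of 1-cycles:
it takes values in `Z₁(X,ℝ)` and `c - p c` is orthogonal to every 1-cycle. -/
def IsOrthoProj (p : ↥X.C1 → ↥X.C1) : Prop :=
  (∀ c, X.IsCycle (p c)) ∧ (∀ c z, X.IsCycle z → X.chainInner (c - p c) z = 0)

/-- Two paths from `x` to `y` are homologous if one can be obtained from the other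
by repeatedly inserting or deleting subwords `e e⁻¹`, and/or replacing a subword
`στ` by `τσ` where `σ` and `τ` are loops based at the same vertex. -/
inductive Homologous : X.V → X.V → List X.E → List X.E → Prop
  | refl {x y : X.V} (γ : List X.E) (h : X.IsPath x y γ) : Homologous x y γ γ
  | cancel {x y : X.V} (γ δ : List X.E) (e : X.E)
      (h : X.IsPath x y (γ ++ e :: X.inv e :: δ)) (h' : X.IsPath x y (γ ++ δ)) :
      Homologous x y (γ ++ e :: X.inv e :: δ) (γ ++ δ)
  | swap {x y : X.V} (γ σ τ δ : List X.E) (v : X.V)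
      (hσ : X.IsPath v v σ) (hτ : X.IsPath v v τ)
      (h : X.IsPath x y (γ ++ (σ ++ (τ ++ δ))))
      (h' : X.IsPath x y (γ ++ (τ ++ (σ ++ δ)))) :
      Homologous x y (γ ++ (σ ++ (τ ++ δ))) (γ ++ (τ ++ (σ ++ δ)))
  | symm {x y : X.V} {a b : List X.E} (h : Homologous x y a b) : Homologous x y b a
  | trans {x y : X.V} {a b c : List X.E} (h1 : Homologous x y a b)
      (h2 : Homologous x y b c) : Homologous x y a c

/-- A simple path: no vertex is visited twice. -/
def IsSimplePath (x y : X.V) (γ : List X.E) : Prop :=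
  X.IsPath x y γ ∧ (x :: γ.map X.t).Nodup

/-- A simple loop based at `x`: a loop in which every vertex other than `x` occurs
at most once and `x` occurs only as the initial and final vertex. -/
def IsSimpleLoop (x : X.V) (γ : List X.E) : Prop :=
  X.IsPath x x γ ∧ (x :: (γ.map X.t).dropLast).Nodup

/-- A reduced word: no subword of the form `e e⁻¹`. -/
def Reduced (γ : List X.E) : Prop := γ.Chain' (fun a b => b ≠ X.inv a)

/-- A spanning tree: a set of edges, closed under inversion, such that the spanning
subgraph it determines is connected and has no nonempty reduced loops. -/
def IsSpanningTree (S : Set X.E) : Prop :=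
  (∀ e ∈ S, X.inv e ∈ S) ∧
  (∀ x y : X.V, ∃ γ : List X.E, X.IsPath x y γ ∧ ∀ e ∈ γ, e ∈ S) ∧
  (∀ (x : X.V) (γ : List X.E), X.IsPath x x γ → (∀ e ∈ γ, e ∈ S) → X.Reduced γ → γ = [])

/-- The quotient of a set of 1-chains by the translation action of the
integral 1-cycles. -/
def transQuot (S : Set ↥X.C1) : Type :=
  Quot (fun a b : S => ∃ z : ↥X.C1, X.IsCycle z ∧ X.IsIntegral z ∧ (b : ↥X.C1) = (a : ↥X.C1) + z)

end SunadaGraph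

lemma intCast_notMem_Ioo (a k : ℤ) : (k : ℝ) ∉ Set.Ioo (a : ℝ) (a + 1) := fun ⟨h₁, h₂⟩ => by
  have : a < k := by exact_mod_cast h₁
  have : k < a + 1 := by exact_mod_cast h₂
  omega

namespace SunadaGraph

variable {X : SunadaGraph}

open scoped Classical

lemma IsPath.append {x y z : X.V} {γ δ : List X.E} (h₁ : X.IsPath x y γ)
    (h₂ : X.IsPath y z δ) : X.IsPath x z (γ ++ δ) := by
  induction h₁ with
  | nil _ => exact h₂
  | cons e _ ih => exact .cons e (ih h₂)

lemma IsPath.exists_edge_leaving {P : X.V → Prop} {v w : X.V} {γ : List X.E}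
    (hγ : X.IsPath v w γ) (hv : P v) (hw : ¬ P w) :
    ∃ k ∈ γ, P (X.s k) ∧ ¬ P (X.t k) := by
  induction hγ with
  | nil _ => exact absurd hv hw
  | cons k _ ih =>
    by_cases hk : P (X.t k)
    · obtain ⟨k', hk', hleave⟩ := ih hk hw
      exact ⟨k', List.mem_cons_of_mem _ hk', hleave⟩
    · exact ⟨k, List.mem_cons_self, hv, hk⟩

lemma chain_apply_inv (c : X.C1) (h : X.E) :
    (c : X.E →₀ ℝ) (X.inv h) = -(c : X.E →₀ ℝ) h :=
  c.2 h

lemma edgeChain_apply (e h : X.E) :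
    (X.edgeChain e : X.E →₀ ℝ) h
      = (if e = h then 1 else 0) - (if X.inv e = h then 1 else 0) := by
  simp [edgeChain, Finsupp.single_apply]

lemma edgeChain_apply_self (e : X.E) : (X.edgeChain e : X.E →₀ ℝ) e = 1 := by
  simp [edgeChain_apply, X.inv_ne]

lemma edgeChain_apply_of_ne {e h : X.E} (he : h ≠ e) (he' : h ≠ X.inv e) :
    (X.edgeChain e : X.E →₀ ℝ) h = 0 := by
  simp [edgeChain_apply, Ne.symm he, Ne.symm he']

lemma edgeChain_inv (e : X.E) : X.edgeChain (X.inv e) = -X.edgeChain e := by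
  refine Subtype.ext (Finsupp.ext fun h => ?_)
  simp only [edgeChain_apply, X.inv_inv, Submodule.coe_neg, Finsupp.neg_apply]
  ring

lemma edgeChain_inv_apply_self (e : X.E) : (X.edgeChain (X.inv e) : X.E →₀ ℝ) e = -1 := by
  rw [edgeChain_inv, Submodule.coe_neg, Finsupp.neg_apply, edgeChain_apply_self]

lemma isIntegral_edgeChain (e : X.E) : X.IsIntegral (X.edgeChain e) := fun h =>
  ⟨(if e = h then 1 else 0) - (if X.inv e = h then 1 else 0), by
    rw [edgeChain_apply]; push_cast; rfl⟩

lemma IsIntegral.add {c d : X.C1} (hc : X.IsIntegral c) (hd : X.IsIntegral d) :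
    X.IsIntegral (c + d) := fun h => by
  obtain ⟨m, hm⟩ := hc h
  obtain ⟨n, hn⟩ := hd h
  exact ⟨m + n, by simp [hm, hn]⟩

@[simp] lemma pathChain_nil : X.pathChain [] = 0 := rfl

lemma pathChain_cons (e : X.E) (γ : List X.E) :
    X.pathChain (e :: γ) = X.edgeChain e + X.pathChain γ := by
  simp [pathChain]

lemma pathChain_append (γ δ : List X.E) :
    X.pathChain (γ ++ δ) = X.pathChain γ + X.pathChain δ := by
  simp [pathChain]

lemma pathChain_singleton (e : X.E) : X.pathChain [e] = X.edgeChain e := by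
  simp [pathChain]

lemma isIntegral_pathChain (γ : List X.E) : X.IsIntegral (X.pathChain γ) := by
  induction γ with
  | nil => exact fun _ => ⟨0, by simp⟩
  | cons e γ ih => rw [pathChain_cons]; exact (isIntegral_edgeChain e).add ih

lemma chainInner_add_right (c d₁ d₂ : X.C1) :
    X.chainInner c (d₁ + d₂) = X.chainInner c d₁ + X.chainInner c d₂ := by
  simp only [chainInner, Submodule.coe_add, Finsupp.add_apply, mul_add, Finsupp.sum_add]

lemma chainInner_sub_right (c d₁ d₂ : X.C1) :
    X.chainInner c (d₁ - d₂) = X.chainInner c d₁ - X.chainInner c d₂ := by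
  simp only [chainInner, Submodule.coe_sub, Finsupp.sub_apply, mul_sub, Finsupp.sum_sub]

lemma chainInner_neg_left (c d : X.C1) : X.chainInner (-c) d = -X.chainInner c d := by
  rw [chainInner, chainInner, Submodule.coe_neg, Finsupp.sum_neg_index fun _ => zero_mul _]
  simp only [neg_mul, Finsupp.sum_neg]
  ring

lemma chainInner_edgeChain (c : X.C1) (e : X.E) :
    X.chainInner c (X.edgeChain e) = (c : X.E →₀ ℝ) e := by
  simp only [chainInner, edgeChain_apply, mul_sub, mul_ite, mul_one, mul_zero, Finsupp.sum_sub,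
    Finsupp.sum_ite_self_eq, chain_apply_inv]
  ring

variable (X) in
def OrthogonalToCycles (c : X.C1) : Prop := ∀ z, X.IsCycle z → X.chainInner c z = 0

lemma OrthogonalToCycles.neg {c : X.C1} (hc : X.OrthogonalToCycles c) :
    X.OrthogonalToCycles (-c) := fun z hz => by
  rw [chainInner_neg_left, hc z hz, neg_zero]

lemma boundary_eq_linearCombination (c : X.C1) :
    X.boundary c = Finsupp.linearCombination ℝ
      (fun k => Finsupp.single (X.t k) (1 : ℝ) - Finsupp.single (X.s k) 1) (c : X.E →₀ ℝ) :=
  (Finsupp.linearCombination_apply _ _).symm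

lemma boundary_add (c d : X.C1) : X.boundary (c + d) = X.boundary c + X.boundary d := by
  simp only [boundary_eq_linearCombination, Submodule.coe_add, map_add]

lemma boundary_sub (c d : X.C1) : X.boundary (c - d) = X.boundary c - X.boundary d := by
  simp only [boundary_eq_linearCombination, Submodule.coe_sub, map_sub]

lemma boundary_smul (r : ℝ) (c : X.C1) : X.boundary (r • c) = r • X.boundary c := by
  simp only [boundary_eq_linearCombination, Submodule.coe_smul, map_smul]

lemma boundary_edgeChain (e : X.E) :
    X.boundary (X.edgeChain e)
      = (2 : ℝ) • (Finsupp.single (X.t e) 1 - Finsupp.single (X.s e) 1) := by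
  rw [boundary_eq_linearCombination]
  simp only [edgeChain, map_sub, Finsupp.linearCombination_single, X.t_inv, X.s_inv, one_smul]
  module

lemma boundary_pathChain {x y : X.V} {γ : List X.E} (hγ : X.IsPath x y γ) :
    X.boundary (X.pathChain γ) = (2 : ℝ) • (Finsupp.single y 1 - Finsupp.single x 1) := by
  induction hγ with
  | nil x => simp [boundary_eq_linearCombination]
  | cons e _ ih =>
    rw [pathChain_cons, boundary_add, boundary_edgeChain, ih]
    module

lemma isCycle_pathChain_sub {x y : X.V} {γ δ : List X.E} (hγ : X.IsPath x y γ)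
    (hδ : X.IsPath x y δ) : X.IsCycle (X.pathChain γ - X.pathChain δ) := by
  rw [IsCycle, boundary_sub, boundary_pathChain hγ, boundary_pathChain hδ, sub_self]

lemma exists_potential (hconn : X.Connected) {c : X.C1} (horth : X.OrthogonalToCycles c) :
    ∃ g : X.V → ℝ, ∀ k, (c : X.E →₀ ℝ) k = g (X.t k) - g (X.s k) := by
  choose γ hγ using hconn
  rcases isEmpty_or_nonempty X.V with hV | ⟨⟨x₀⟩⟩
  · exact ⟨0, fun k => isEmptyElim (X.s k)⟩
  refine ⟨fun y => X.chainInner c (X.pathChain (γ x₀ y)), fun k => ?_⟩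
  have hcycle := horth _ <|
    isCycle_pathChain_sub ((hγ x₀ (X.s k)).append (.cons k (.nil _))) (hγ x₀ (X.t k))
  rw [chainInner_sub_right, pathChain_append, chainInner_add_right, pathChain_singleton,
    chainInner_edgeChain] at hcycle
  linarith

variable (X) in
noncomputable def flux (φ : X.V → ℝ) (c : X.C1) : ℝ :=
  Finsupp.linearCombination ℝ φ (X.boundary c)

lemma flux_eq_sum (φ : X.V → ℝ) (c : X.C1) :
    X.flux φ c
      = ∑ k ∈ (c : X.E →₀ ℝ).support,
          (c : X.E →₀ ℝ) k * (φ (X.t k) - φ (X.s k)) := by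
  rw [flux, boundary, map_finsuppSum, Finsupp.sum]
  refine Finset.sum_congr rfl fun k _ => ?_
  simp only [map_smul, map_sub, Finsupp.linearCombination_single, smul_eq_mul, one_mul]

lemma flux_sub (φ : X.V → ℝ) (c d : X.C1) : X.flux φ (c - d) = X.flux φ c - X.flux φ d := by
  simp only [flux, boundary_sub, map_sub]

lemma two_mul_lt_flux_of_not_isBridge {c : X.C1} {g : X.V → ℝ}
    (hg : ∀ k, (c : X.E →₀ ℝ) k = g (X.t k) - g (X.s k)) {h : X.E} (hh : ¬ X.IsBridge h)
    (hpos : 0 < (c : X.E →₀ ℝ) h) :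
    ∃ U : Set X.V, X.s h ∉ U ∧ X.t h ∈ U ∧
      2 * (c : X.E →₀ ℝ) h < X.flux (U.indicator 1) c := by
  set U : Set X.V := {v | g (X.s h) < g v}
  set φ : X.V → ℝ := U.indicator 1
  have hsU : X.s h ∉ U := lt_irrefl (g (X.s h))
  have htU : X.t h ∈ U := show g (X.s h) < g (X.t h) by linarith [hg h]
  obtain ⟨γ, hγ, hhγ, hhγ'⟩ := not_not.mp hh
  obtain ⟨k, hk, hks, hkt⟩ := hγ.exists_edge_leaving (P := (· ∈ U)) htU hsU
  have hkh : k ≠ h := fun hkh => hhγ (hkh ▸ hk)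
  have hkh' : k ≠ X.inv h := fun hkh => hhγ' (hkh ▸ hk)
  have hck : (c : X.E →₀ ℝ) k < 0 := by
    have hks' : g (X.s h) < g (X.s k) := hks
    have hkt' : ¬ g (X.s h) < g (X.t k) := hkt
    linarith [hg k]
  -- The cut is monotone in the potential, so every edge crosses it with nonnegative flux.
  have hterm : ∀ l, 0 ≤ (c : X.E →₀ ℝ) l * (φ (X.t l) - φ (X.s l)) := fun l => by
    rw [hg l]
    by_cases hs : g (X.s h) < g (X.s l) <;> by_cases ht : g (X.s h) < g (X.t l) <;>
      simp [φ, U, hs, ht] <;> linarith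
  have hsupp : ({h, X.inv h, k} : Finset X.E) ⊆ (c : X.E →₀ ℝ).support := by
    intro l hl
    simp only [Finset.mem_insert, Finset.mem_singleton] at hl
    rw [Finsupp.mem_support_iff]
    rcases hl with rfl | rfl | rfl
    · exact hpos.ne'
    · rw [chain_apply_inv]; exact neg_ne_zero.mpr hpos.ne'
    · exact hck.ne
  refine ⟨U, hsU, htU, ?_⟩
  calc 2 * (c : X.E →₀ ℝ) h
      < ∑ l ∈ {h, X.inv h, k}, (c : X.E →₀ ℝ) l * (φ (X.t l) - φ (X.s l)) := by
        rw [Finset.sum_insert (by simp [(X.inv_ne h).symm, hkh.symm]),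
          Finset.sum_insert (by simpa using fun hhk => hkh' hhk.symm), Finset.sum_singleton,
          chain_apply_inv, X.t_inv, X.s_inv]
        simp only [φ, Set.indicator_of_mem htU, Set.indicator_of_notMem hsU,
          Set.indicator_of_mem hks, Set.indicator_of_notMem hkt, Pi.one_apply]
        linarith
    _ ≤ X.flux φ c :=
        (Finset.sum_le_sum_of_subset_of_nonneg hsupp fun l _ _ => hterm l).trans_eq
          (flux_eq_sum φ c).symm

variable (X) in
/-- The chain of the point at parameter `t` on the edge `e` appended to `γ`. -/
noncomputable def pointChain (γ : List X.E) (e : X.E) (t : ℝ) : X.C1 :=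
  X.pathChain γ + t • X.edgeChain e

lemma pointChain_apply (γ : List X.E) (e : X.E) (t : ℝ) (h : X.E) :
    (X.pointChain γ e t : X.E →₀ ℝ) h = (X.pathChain γ : X.E →₀ ℝ) h
      + t * (X.edgeChain e : X.E →₀ ℝ) h := by
  simp [pointChain]

lemma pointChain_append_inv (γ : List X.E) (e : X.E) (t : ℝ) :
    X.pointChain (γ ++ [e]) (X.inv e) (1 - t) = X.pointChain γ e t := by
  simp only [pointChain, pathChain_append, pathChain_singleton, edgeChain_inv]
  module

lemma flux_pointChain {x₀ : X.V} {γ : List X.E} {e : X.E} (hγ : X.IsPath x₀ (X.s e) γ)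
    (φ : X.V → ℝ) (t : ℝ) :
    X.flux φ (X.pointChain γ e t)
      = 2 * (φ (X.s e) - φ x₀ + t * (φ (X.t e) - φ (X.s e))) := by
  simp only [flux, pointChain, boundary_add, boundary_smul, boundary_pathChain hγ,
    boundary_edgeChain, map_add, map_smul, map_sub, Finsupp.linearCombination_single,
    smul_eq_mul]
  ring

section PointChains

variable {x₀ : X.V} {α β : List X.E} {e f : X.E} {t u : ℝ}

lemma exists_cut_of_pointChain_lt (hconn : X.Connected) (hbr : ∀ h, ¬ X.IsBridge h)
    (hα : X.IsPath x₀ (X.s e) α) (hβ : X.IsPath x₀ (X.s f) β)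
    (horth : X.OrthogonalToCycles (X.pointChain α e t - X.pointChain β f u))
    {h : X.E}
    (hlt : (X.pointChain β f u : X.E →₀ ℝ) h < (X.pointChain α e t : X.E →₀ ℝ) h) :
    ∃ φ : X.V → ℝ, (∀ v, 0 ≤ φ v ∧ φ v ≤ 1) ∧ φ (X.s h) = 0 ∧
      φ (X.t h) = 1 ∧
      (X.pointChain α e t : X.E →₀ ℝ) h - (X.pointChain β f u : X.E →₀ ℝ) h
        < φ (X.s e) - φ (X.s f) + t * (φ (X.t e) - φ (X.s e))
          - u * (φ (X.t f) - φ (X.s f)) := by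
  obtain ⟨g, hg⟩ := exists_potential hconn horth
  obtain ⟨U, hsU, htU, hflux⟩ := two_mul_lt_flux_of_not_isBridge hg (hbr h)
    (by rwa [Submodule.coe_sub, Finsupp.sub_apply, sub_pos])
  rw [flux_sub, flux_pointChain hα, flux_pointChain hβ, Submodule.coe_sub, Finsupp.sub_apply]
    at hflux
  refine ⟨U.indicator 1, fun v => ?_, Set.indicator_of_notMem hsU _, Set.indicator_of_mem htU _,
    by linarith⟩
  by_cases hv : v ∈ U <;> simp [hv]

lemma pointChain_apply_le_of_ne (hconn : X.Connected) (hbr : ∀ h, ¬ X.IsBridge h)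
    (hα : X.IsPath x₀ (X.s e) α) (hβ : X.IsPath x₀ (X.s f) β)
    (ht : t ∈ Set.Icc (0 : ℝ) 1) (hu : u ∈ Set.Icc (0 : ℝ) 1)
    (horth : X.OrthogonalToCycles (X.pointChain α e t - X.pointChain β f u))
    {h : X.E} (he : h ≠ e) (he' : h ≠ X.inv e) (hf : h ≠ f) (hf' : h ≠ X.inv f) :
    (X.pointChain α e t : X.E →₀ ℝ) h ≤ (X.pointChain β f u : X.E →₀ ℝ) h := by
  by_contra! hlt
  obtain ⟨φ, hφ, -, -, hcut⟩ := exists_cut_of_pointChain_lt hconn hbr hα hβ horth hlt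
  obtain ⟨m, hm⟩ := isIntegral_pathChain α h
  obtain ⟨n, hn⟩ := isIntegral_pathChain β h
  simp only [pointChain_apply, edgeChain_apply_of_ne he he', edgeChain_apply_of_ne hf hf', hm, hn,
    mul_zero, add_zero] at hlt hcut
  refine intCast_notMem_Ioo 0 (m - n) ⟨by push_cast; linarith, ?_⟩
  push_cast
  nlinarith [hφ (X.s e), hφ (X.t e), hφ (X.s f), hφ (X.t f), ht.1, ht.2, hu.1, hu.2]

lemma pointChain_apply_self_le (hconn : X.Connected) (hbr : ∀ h, ¬ X.IsBridge h)
    (hα : X.IsPath x₀ (X.s e) α) (hβ : X.IsPath x₀ (X.s f) β)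
    (ht : t ∈ Set.Icc (0 : ℝ) 1) (hu : u ∈ Set.Icc (0 : ℝ) 1)
    (horth : X.OrthogonalToCycles (X.pointChain α e t - X.pointChain β f u)) :
    (X.pointChain α e t : X.E →₀ ℝ) e ≤ (X.pointChain β f u : X.E →₀ ℝ) e := by
  by_contra! hlt
  obtain ⟨φ, hφ, hφs, hφt, hcut⟩ := exists_cut_of_pointChain_lt hconn hbr hα hβ horth hlt
  obtain ⟨m, hm⟩ := isIntegral_pathChain α e
  obtain ⟨n, hn⟩ := isIntegral_pathChain β e
  simp only [pointChain_apply, edgeChain_apply_self, hm, hn, hφs, hφt] at hlt hcut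
  by_cases hfe : f = e
  · subst hfe
    simp only [edgeChain_apply_self, hφs, hφt] at hlt hcut
    exact intCast_notMem_Ioo (-1) (m - n)
      ⟨by push_cast; linarith [ht.2, hu.1], by push_cast; linarith⟩
  by_cases hfe' : f = X.inv e
  · subst hfe'
    simp only [edgeChain_inv_apply_self, X.s_inv, X.t_inv, hφs, hφt] at hlt hcut
    exact intCast_notMem_Ioo (-2) (m - n)
      ⟨by push_cast; linarith [ht.2, hu.2], by push_cast; linarith⟩
  rw [edgeChain_apply_of_ne (Ne.symm hfe) (fun h => hfe' (by rw [h, X.inv_inv])), mul_zero,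
    add_zero] at hlt hcut
  exact intCast_notMem_Ioo (-1) (m - n) ⟨by push_cast; linarith [ht.2], by
    push_cast
    nlinarith [hφ (X.s f), hφ (X.t f), hu.1, hu.2]⟩

lemma pointChain_apply_self (hconn : X.Connected) (hbr : ∀ h, ¬ X.IsBridge h)
    (hα : X.IsPath x₀ (X.s e) α) (hβ : X.IsPath x₀ (X.s f) β)
    (ht : t ∈ Set.Icc (0 : ℝ) 1) (hu : u ∈ Set.Icc (0 : ℝ) 1)
    (horth : X.OrthogonalToCycles (X.pointChain α e t - X.pointChain β f u)) :
    (X.pointChain α e t : X.E →₀ ℝ) e = (X.pointChain β f u : X.E →₀ ℝ) e := by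
  refine le_antisymm (pointChain_apply_self_le hconn hbr hα hβ ht hu horth) ?_
  have hαe : X.IsPath x₀ (X.s (X.inv e)) (α ++ [e]) := by
    rw [X.s_inv]; exact hα.append (.cons e (.nil _))
  have hinv := pointChain_apply_self_le (t := 1 - t) hconn hbr hαe hβ
    ⟨by linarith [ht.2], by linarith [ht.1]⟩ hu (by rwa [pointChain_append_inv])
  rw [pointChain_append_inv, chain_apply_inv, chain_apply_inv] at hinv
  linarith

end PointChains

end SunadaGraph

/-- In a connected bridgeless graph with basepoint `x₀`, if the 1-chain
`(c_α + t·e) − (c_β + u·f)` is orthogonal to every 1-cycle (where `α : x₀ → x`,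
`β : x₀ → x'`, `s(e) = x`, `s(f) = x'`, `t, u ∈ [0,1]`), then `c_α + t·e = c_β + u·f`. -/
theorem bond_points_eq_of_orthogonal (X : SunadaGraph) (hconn : X.Connected)
    (hbr : ∀ e : X.E, ¬ X.IsBridge e) (x₀ x x' : X.V)
    (α β : List X.E) (hα : X.IsPath x₀ x α) (hβ : X.IsPath x₀ x' β)
    (e f : X.E) (he : X.s e = x) (hf : X.s f = x')
    (t u : ℝ) (ht : t ∈ Set.Icc (0:ℝ) 1) (hu : u ∈ Set.Icc (0:ℝ) 1)
    (horth : ∀ z : ↥X.C1, X.IsCycle z →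
      X.chainInner ((X.pathChain α + t • X.edgeChain e)
        - (X.pathChain β + u • X.edgeChain f)) z = 0) :
    X.pathChain α + t • X.edgeChain e = X.pathChain β + u • X.edgeChain f := by
  subst he hf
  change X.OrthogonalToCycles (X.pointChain α e t - X.pointChain β f u) at horth
  have horth' := neg_sub (X.pointChain α e t) _ ▸ horth.neg
  have hce := SunadaGraph.pointChain_apply_self hconn hbr hα hβ ht hu horth
  have hcf := SunadaGraph.pointChain_apply_self hconn hbr hβ hα hu ht horth'
  change X.pointChain α e t = X.pointChain β f u
  refine Subtype.ext (Finsupp.ext fun h => ?_)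
  by_cases he : h = e
  · rw [he, hce]
  by_cases he' : h = X.inv e
  · rw [he', SunadaGraph.chain_apply_inv, SunadaGraph.chain_apply_inv, hce]
  by_cases hf : h = f
  · rw [hf, hcf]
  by_cases hf' : h = X.inv f
  · rw [hf', SunadaGraph.chain_apply_inv, SunadaGraph.chain_apply_inv, hcf]
  exact le_antisymm
    (SunadaGraph.pointChain_apply_le_of_ne hconn hbr hα hβ ht hu horth he he' hf hf')
    (SunadaGraph.pointChain_apply_le_of_ne hconn hbr hβ hα hu ht horth' hf hf' he he')
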